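/- Let S = diag[s₁,s₂,s₃] ≠ 0 with s₁ ≥ s₂ ≥ |s₃| ≥ 0, and let σ ∈ ℝ satisfy max{ (2s₁+s₂−s₃−1)/(2s₁+s₂−s₃+1), (s₁−s₃)/(s₁+s₂) } < σ < 1 and σ ≥ 0. For each (i,j,k) ∈ 𝓘 define x_i ∈ ℝ by: x_i = σ + (1−σ)(log c(S) − s_i)/(s_j+s_k) if s_j+s_k ≥ 1, and x_i = (σ + (1−σ)(log c(S) − s_i) + 1/2)(s_j+s_k) − 1/2 if 0 ≤ s_j+s_k < 1. Then −1 < x_i < 1, so that there exists a unique θ_i ∈ (0,π) with cos θ_i = x_i; in particular, −2s₁ − s₂ + s₃ < log c(S) − s_i < s_j + s_k for every (i,j,k) ∈ 𝓘. -/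

import Mathlib

/-! Entrywise, `tr(SᵀR) = s₁R₁₁ + s₂R₂₂ + s₃R₃₃`. Left-invariance of Haar measure under the
diagonal sign rotations forces every entry of `R` to have mean zero, so by Jensen
`c(S) ≥ exp 0 = 1`. On `SO(3)`, `R₁₁ + R₂₂ - R₃₃ ≤ 1` (a sum of squares identity), which together
with `Rᵢᵢ ≤ 1` and the ordering `s₁ ≥ s₂ ≥ |s₃|` gives `tr(SᵀR) ≤ s₁ + s₂ + s₃`, with equality not
almost everywhere because the mean is `0 < s₁ + s₂ + s₃`. Hence
`0 ≤ log c(S) < s₁ + s₂ + s₃`, and the bounds on `xᵢ` are elementary algebra in `σ`. -/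

open MeasureTheory Matrix Real

noncomputable section

/-- The space of real 3×3 matrices. -/
abbrev M3 : Type := Matrix (Fin 3) (Fin 3) ℝ

instance : MeasurableSpace M3 := inferInstanceAs (MeasurableSpace (Fin 3 → Fin 3 → ℝ))

/-- The special orthogonal group SO(3), as a set of real 3×3 matrices. -/
def SO3 : Set M3 := {R | Rᵀ * R = 1 ∧ R.det = 1}

/-- The normalizing constant of the matrix Fisher distribution,
`c(F) = ∫_{SO(3)} exp(tr(Fᵀ R)) dR`. -/
noncomputable def mfC (μ : Measure M3) (F : M3) : ℝ :=
  ∫ R, Real.exp (Fᵀ * R).trace ∂μ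

/-- The cosine of the sigma-point rotation angle in the unscented transform:
`xᵢ = σ + (1−σ)(log c(S) − sᵢ)/(sⱼ+sₖ)` if `sⱼ+sₖ ≥ 1`, and
`xᵢ = (σ + (1−σ)(log c(S) − sᵢ) + 1/2)(sⱼ+sₖ) − 1/2` if `0 ≤ sⱼ+sₖ < 1`. -/
noncomputable def sigmaCos (σ logc si sj sk : ℝ) : ℝ :=
  if 1 ≤ sj + sk then σ + (1 - σ) * (logc - si) / (sj + sk)
  else (σ + (1 - σ) * (logc - si) + 1 / 2) * (sj + sk) - 1 / 2

instance : BorelSpace M3 := inferInstanceAs (BorelSpace (Fin 3 → Fin 3 → ℝ))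

section Jensen

variable {α : Type*} [MeasurableSpace α] {μ : Measure α} {f : α → ℝ} {T : ℝ}

lemma integrable_exp_of_ae_le [IsFiniteMeasure μ] (hf : AEStronglyMeasurable f μ)
    (hfT : ∀ᵐ x ∂μ, f x ≤ T) : Integrable (fun x => exp (f x)) μ := by
  refine (integrable_const (exp T)).mono' (continuous_exp.comp_aestronglyMeasurable hf) ?_
  filter_upwards [hfT] with x hx
  simpa using hx

lemma one_le_integral_exp [IsProbabilityMeasure μ] (hf : Integrable f μ)
    (hexp : Integrable (fun x => exp (f x)) μ) (hf0 : ∫ x, f x ∂μ = 0) :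
    1 ≤ ∫ x, exp (f x) ∂μ := by
  simpa [hf0] using convexOn_exp.map_integral_le continuous_exp.continuousOn isClosed_univ
    (by simp) hf hexp

lemma integral_exp_lt_exp [IsProbabilityMeasure μ] (hexp : Integrable (fun x => exp (f x)) μ)
    (hfT : ∀ᵐ x ∂μ, f x ≤ T) (hlt : ∫ x, f x ∂μ < T) : ∫ x, exp (f x) ∂μ < exp T := by
  have hgap : 0 ≤ᵐ[μ] fun x => exp T - exp (f x) := by
    filter_upwards [hfT] with x hx
    simpa using hx
  have hgap_int : Integrable (fun x => exp T - exp (f x)) μ := (integrable_const _).sub hexp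
  by_contra! hle
  have hzero : (fun x => exp T - exp (f x)) =ᵐ[μ] 0 := by
    refine (integral_eq_zero_iff_of_nonneg_ae hgap hgap_int).mp (le_antisymm ?_ ?_)
    · rw [integral_sub (integrable_const _) hexp]
      simpa using hle
    · exact integral_nonneg_of_ae hgap
  have hfT' : f =ᵐ[μ] fun _ => T := by
    filter_upwards [hzero] with x hx
    exact (exp_injective (sub_eq_zero.mp hx)).symm
  simp [integral_congr_ae hfT'] at hlt

end Jensen

lemma abs_apply_le_one_of_mem_SO3 {R : M3} (hR : R ∈ SO3) (a b : Fin 3) : |R a b| ≤ 1 := by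
  have hcol : ∑ i, R i b ^ 2 = 1 := by
    simpa [Matrix.mul_apply, sq] using congrFun (congrFun hR.1 b) b
  rw [← sq_le_one_iff_abs_le_one, ← hcol]
  exact Finset.single_le_sum (fun i _ => sq_nonneg (R i b)) (Finset.mem_univ a)

lemma apply_zero_zero_add_apply_one_one_sub_apply_two_two_le_one {R : M3} (hR : R ∈ SO3) :
    R 0 0 + R 1 1 - R 2 2 ≤ 1 := by
  -- `adj R = Rᵀ` identifies each diagonal cofactor with the diagonal entry
  have hadj : R.adjugate = Rᵀ := by
    rw [← Matrix.inv_eq_left_inv hR.1, Matrix.inv_def, hR.2, Ring.inverse_one, one_smul]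
  rw [Matrix.adjugate_fin_three] at hadj
  have hcol (b : Fin 3) : R 0 b * R 0 b + R 1 b * R 1 b + R 2 b * R 2 b = 1 := by
    simpa [Matrix.mul_apply, Fin.sum_univ_three] using congrFun (congrFun hR.1 b) b
  have h00 := congrFun (congrFun hadj 0) 0
  have h11 := congrFun (congrFun hadj 1) 1
  have h22 := congrFun (congrFun hadj 2) 2
  simp only [of_apply, cons_val', cons_val_zero, cons_val_fin_one, transpose_apply,
    cons_val_one, cons_val] at h00 h11 h22
  have key : 4 * (1 - (R 0 0 + R 1 1 - R 2 2)) =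
      (R 1 0 - R 0 1) ^ 2 + (R 0 2 + R 2 0) ^ 2 + (R 1 2 + R 2 1) ^ 2
        + (1 - R 0 0 - R 1 1 + R 2 2) ^ 2 := by
    linear_combination -hcol 0 - hcol 1 - hcol 2 + 2 * h00 + 2 * h11 - 2 * h22
  nlinarith [sq_nonneg (R 1 0 - R 0 1), sq_nonneg (R 0 2 + R 2 0),
    sq_nonneg (R 1 2 + R 2 1), sq_nonneg (1 - R 0 0 - R 1 1 + R 2 2)]

lemma weighted_diag_le_of_mem_SO3 {s₁ s₂ s₃ : ℝ} (h12 : s₂ ≤ s₁) (h23 : |s₃| ≤ s₂) {R : M3}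
    (hR : R ∈ SO3) : s₁ * R 0 0 + s₂ * R 1 1 + s₃ * R 2 2 ≤ s₁ + s₂ + s₃ := by
  obtain ⟨h3l, h3u⟩ := abs_le.mp h23
  have hle (i : Fin 3) : R i i ≤ 1 := (abs_le.mp (abs_apply_le_one_of_mem_SO3 hR i i)).2
  have hkey := apply_zero_zero_add_apply_one_one_sub_apply_two_two_le_one hR
  rcases le_or_gt 0 s₃ with hs₃ | hs₃
  · nlinarith [mul_nonneg (by linarith : (0:ℝ) ≤ s₁) (sub_nonneg.2 (hle 0)),
      mul_nonneg (by linarith : (0:ℝ) ≤ s₂) (sub_nonneg.2 (hle 1)),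
      mul_nonneg hs₃ (sub_nonneg.2 (hle 2))]
  -- for `s₃ < 0` the gap is
  -- `(s₁ + s₃)(1 - R 0 0) + (s₂ + s₃)(1 - R 1 1) - s₃(1 - R 0 0 - R 1 1 + R 2 2)`
  · nlinarith [mul_nonneg (by linarith : (0:ℝ) ≤ s₁ + s₃) (sub_nonneg.2 (hle 0)),
      mul_nonneg (by linarith : (0:ℝ) ≤ s₂ + s₃) (sub_nonneg.2 (hle 1)),
      mul_nonneg (by linarith : (0:ℝ) ≤ -s₃) (sub_nonneg.2 hkey)]

lemma diagonal_mem_SO3 {q : Fin 3 → ℝ} (hsq : ∀ i, q i * q i = 1) (hdet : ∏ i, q i = 1) :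
    diagonal q ∈ SO3 :=
  ⟨by rw [diagonal_transpose, diagonal_mul_diagonal, funext hsq, diagonal_one],
    by rw [det_diagonal, hdet]⟩

lemma exists_diagonal_mem_SO3_apply_eq_neg_one (a : Fin 3) :
    ∃ q : Fin 3 → ℝ, diagonal q ∈ SO3 ∧ q a = -1 := by
  refine ⟨fun i => if i = a + 1 then 1 else -1, diagonal_mem_SO3 ?_ ?_, by simp⟩
  · intro i; split_ifs <;> norm_num
  · fin_cases a <;> simp [Fin.prod_univ_three]

section IntegralsOverSO3

variable {μ : Measure M3}

lemma measurable_apply_apply (a b : Fin 3) : Measurable fun R : M3 => R a b := by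
  fun_prop

lemma integral_apply_eq_zero (hleft : ∀ Q ∈ SO3, μ.map (fun R => Q * R) = μ) (a b : Fin 3) :
    ∫ R, R a b ∂μ = 0 := by
  obtain ⟨q, hq, hqa⟩ := exists_diagonal_mem_SO3_apply_eq_neg_one a
  have hflip : ∫ R, R a b ∂μ = -∫ R, R a b ∂μ := by
    conv_lhs => rw [← hleft _ hq]
    rw [integral_map (by fun_prop) (measurable_apply_apply a b).aestronglyMeasurable]
    simp [diagonal_mul, hqa, integral_neg]
  linarith

lemma integrable_apply [IsFiniteMeasure μ] (hsupp : μ SO3ᶜ = 0) (a b : Fin 3) :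
    Integrable (fun R : M3 => R a b) μ := by
  refine (integrable_const 1).mono' (measurable_apply_apply a b).aestronglyMeasurable ?_
  filter_upwards [ae_iff.mpr hsupp] with R hR
  simpa using abs_apply_le_one_of_mem_SO3 hR a b

lemma integrable_sum_diag [IsFiniteMeasure μ] (hsupp : μ SO3ᶜ = 0) (s : Fin 3 → ℝ) :
    Integrable (fun R : M3 => ∑ i, s i * R i i) μ :=
  integrable_finsetSum _ fun i _ => (integrable_apply hsupp i i).const_mul (s i)

lemma integral_sum_diag_eq_zero [IsFiniteMeasure μ] (hsupp : μ SO3ᶜ = 0)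
    (hleft : ∀ Q ∈ SO3, μ.map (fun R => Q * R) = μ) (s : Fin 3 → ℝ) :
    ∫ R, ∑ i, s i * R i i ∂μ = 0 := by
  rw [integral_finsetSum _ fun i _ => (integrable_apply hsupp i i).const_mul (s i)]
  simp [integral_const_mul, integral_apply_eq_zero hleft]

lemma integrable_exp_sum_diag [IsFiniteMeasure μ] (hsupp : μ SO3ᶜ = 0) (s : Fin 3 → ℝ) :
    Integrable (fun R : M3 => exp (∑ i, s i * R i i)) μ := by
  refine integrable_exp_of_ae_le (T := ∑ i, |s i|) (integrable_sum_diag hsupp s).1 ?_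
  filter_upwards [ae_iff.mpr hsupp] with R hR
  gcongr with i
  calc s i * R i i ≤ |s i * R i i| := le_abs_self _
    _ ≤ |s i| := by
      rw [abs_mul]
      exact mul_le_of_le_one_right (abs_nonneg _) (abs_apply_le_one_of_mem_SO3 hR i i)

end IntegralsOverSO3

lemma trace_transpose_diagonal_mul {n α : Type*} [Fintype n] [DecidableEq n] [CommSemiring α]
    (s : n → α) (R : Matrix n n α) : ((diagonal s)ᵀ * R).trace = ∑ i, s i * R i i := by
  simp [Matrix.trace, diagonal_mul]

section MatrixFisher

variable {μ : Measure M3} [IsProbabilityMeasure μ]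

lemma one_le_mfC_diagonal (hsupp : μ SO3ᶜ = 0)
    (hleft : ∀ Q ∈ SO3, μ.map (fun R => Q * R) = μ) (s : Fin 3 → ℝ) :
    1 ≤ mfC μ (diagonal s) := by
  simp only [mfC, trace_transpose_diagonal_mul]
  exact one_le_integral_exp (integrable_sum_diag hsupp s) (integrable_exp_sum_diag hsupp s)
    (integral_sum_diag_eq_zero hsupp hleft s)

lemma mfC_diagonal_lt_exp (hsupp : μ SO3ᶜ = 0)
    (hleft : ∀ Q ∈ SO3, μ.map (fun R => Q * R) = μ) {s₁ s₂ s₃ : ℝ} (h12 : s₂ ≤ s₁)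
    (h23 : |s₃| ≤ s₂) (hpos : 0 < s₁ + s₂ + s₃) :
    mfC μ (diagonal ![s₁, s₂, s₃]) < exp (s₁ + s₂ + s₃) := by
  simp only [mfC, trace_transpose_diagonal_mul]
  refine integral_exp_lt_exp (integrable_exp_sum_diag hsupp _) ?_ ?_
  · filter_upwards [ae_iff.mpr hsupp] with R hR
    simpa [Fin.sum_univ_three] using weighted_diag_le_of_mem_SO3 h12 h23 hR
  · rwa [integral_sum_diag_eq_zero hsupp hleft]

end MatrixFisher

lemma sigmaCos_mem_Ioo {σ L si sj sk : ℝ} (hσ : σ ∈ Set.Ioo (-1) 1)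
    (hlow : -(1 + σ) < (1 - σ) * (L - si)) (hup : L - si < sj + sk) (hjk : 0 ≤ sj + sk) :
    sigmaCos σ L si sj sk ∈ Set.Ioo (-1) 1 := by
  obtain ⟨hσl, hσu⟩ := hσ
  have hup' : (1 - σ) * (L - si) < (1 - σ) * (sj + sk) :=
    mul_lt_mul_of_pos_left hup (by linarith)
  unfold sigmaCos
  split_ifs with h
  · have hpos : 0 < sj + sk := by linarith
    rw [Set.mem_Ioo, ← sub_lt_iff_lt_add', lt_div_iff₀ hpos, add_div', div_lt_one hpos]
    · constructor <;> nlinarith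
    · exact hpos.ne'
  · have hlt : (1 - σ) * (sj + sk) < 1 - σ :=
      mul_lt_of_lt_one_right (by linarith) (not_le.mp h)
    set b := σ + (1 - σ) * (L - si)
    have hb : b ∈ Set.Ioo (-1) 1 := ⟨by linarith, by linarith⟩
    constructor <;> nlinarith [mul_nonneg (by linarith [hb.1] : (0:ℝ) ≤ b + 1) hjk,
      mul_nonneg (by linarith [hb.2] : (0:ℝ) ≤ 1 - b) hjk]

lemma existsUnique_cos_eq_of_mem_Ioo {x : ℝ} (hx : x ∈ Set.Ioo (-1) 1) :
    ∃! t : ℝ, t ∈ Set.Ioo 0 π ∧ cos t = x := by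
  refine ⟨arccos x, ⟨⟨arccos_pos.2 hx.2, arccos_lt_pi.2 hx.1⟩, cos_arccos hx.1.le hx.2.le⟩, ?_⟩
  rintro t ⟨ht, rfl⟩
  exact injOn_cos (Set.Ioo_subset_Icc_self ht) ⟨arccos_nonneg _, arccos_le_pi _⟩
    (cos_arccos (neg_one_le_cos t) (cos_le_one t)).symm

lemma pos_of_diagonal_ne_zero {s₁ s₂ s₃ : ℝ} (h12 : s₂ ≤ s₁) (h23 : |s₃| ≤ s₂)
    (hS : diagonal ![s₁, s₂, s₃] ≠ 0) : 0 < s₁ := by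
  by_contra! h
  have h₂ : s₂ = 0 := by linarith [abs_nonneg s₃]
  have h₃ : s₃ = 0 := abs_eq_zero.mp (by linarith [abs_nonneg s₃])
  have h₁ : s₁ = 0 := by linarith
  subst h₁ h₂ h₃
  simp at hS

theorem matrixFisher_sigmaPoint_angle_wellDefined_general
    (μ : Measure M3) [IsProbabilityMeasure μ] (hsupp : μ SO3ᶜ = 0)
    (hleft : ∀ Q ∈ SO3, μ.map (fun R => Q * R) = μ)
    (s₁ s₂ s₃ : ℝ) (h12 : s₁ ≥ s₂) (h23 : s₂ ≥ |s₃|)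
    (hS : Matrix.diagonal ![s₁, s₂, s₃] ≠ 0)
    (σ : ℝ)
    (hσmax : max ((2 * s₁ + s₂ - s₃ - 1) / (2 * s₁ + s₂ - s₃ + 1))
        ((s₁ - s₃) / (s₁ + s₂)) < σ)
    (hσ1 : σ < 1) :
    ∀ si sj sk : ℝ,
      (si, sj, sk) ∈ ({(s₁, s₂, s₃), (s₂, s₃, s₁), (s₃, s₁, s₂)} : Set (ℝ × ℝ × ℝ)) →
      (-1 < sigmaCos σ (Real.log (mfC μ (Matrix.diagonal ![s₁, s₂, s₃]))) si sj sk ∧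
        sigmaCos σ (Real.log (mfC μ (Matrix.diagonal ![s₁, s₂, s₃]))) si sj sk < 1) ∧
      (∃! t : ℝ, t ∈ Set.Ioo (0 : ℝ) Real.pi ∧
        Real.cos t =
          sigmaCos σ (Real.log (mfC μ (Matrix.diagonal ![s₁, s₂, s₃]))) si sj sk) ∧
      (-2 * s₁ - s₂ + s₃ <
          Real.log (mfC μ (Matrix.diagonal ![s₁, s₂, s₃])) - si ∧
        Real.log (mfC μ (Matrix.diagonal ![s₁, s₂, s₃])) - si < sj + sk) := by
  intro si sj sk hmem
  obtain ⟨h3l, h3u⟩ := abs_le.mp h23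
  have hs₁ := pos_of_diagonal_ne_zero h12 h23 hS
  have hc := one_le_mfC_diagonal hsupp hleft ![s₁, s₂, s₃]
  have hL0 : 0 ≤ log (mfC μ (diagonal ![s₁, s₂, s₃])) := log_nonneg hc
  have hLT : log (mfC μ (diagonal ![s₁, s₂, s₃])) < s₁ + s₂ + s₃ :=
    (log_lt_iff_lt_exp (by linarith)).2 (mfC_diagonal_lt_exp hsupp hleft h12 h23 (by linarith))
  have hσA : (1 - σ) * (2 * s₁ + s₂ - s₃) < 1 + σ := by
    have := (le_max_left _ _).trans_lt hσmax
    rw [div_lt_iff₀ (by linarith)] at this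
    linarith
  obtain ⟨hsi, hsum, hjk⟩ : si ≤ s₁ ∧ si + sj + sk = s₁ + s₂ + s₃ ∧ 0 ≤ sj + sk := by
    simp only [Set.mem_insert_iff, Set.mem_singleton_iff, Prod.mk.injEq] at hmem
    rcases hmem with ⟨rfl, rfl, rfl⟩ | ⟨rfl, rfl, rfl⟩ | ⟨rfl, rfl, rfl⟩ <;>
      refine ⟨by linarith, by ring, by linarith⟩
  have hlow : -(2 * s₁ + s₂ - s₃) < log (mfC μ (diagonal ![s₁, s₂, s₃])) - si := by linarith
  have hup : log (mfC μ (diagonal ![s₁, s₂, s₃])) - si < sj + sk := by linarith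
  have hx := sigmaCos_mem_Ioo ⟨by nlinarith, hσ1⟩
    (by nlinarith [mul_lt_mul_of_pos_left hlow (sub_pos.2 hσ1)]) hup hjk
  exact ⟨hx, existsUnique_cos_eq_of_mem_Ioo hx, by linarith, hup⟩

/-- Let `S = diag[s₁,s₂,s₃] ≠ 0` with `s₁ ≥ s₂ ≥ |s₃| ≥ 0`,
and let `σ` satisfy
`max{(2s₁+s₂−s₃−1)/(2s₁+s₂−s₃+1), (s₁−s₃)/(s₁+s₂)} < σ < 1` with `σ ≥ 0`.
Then for each cyclic shift `(sᵢ,sⱼ,sₖ)` of `(s₁,s₂,s₃)`, the quantity `xᵢ`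
defined in `sigmaCos` satisfies `−1 < xᵢ < 1`, so there exists a unique
`θᵢ ∈ (0,π)` with `cos θᵢ = xᵢ`; in particular,
`−2s₁ − s₂ + s₃ < log c(S) − sᵢ < sⱼ + sₖ`. -/
theorem matrixFisher_sigmaPoint_angle_wellDefined
    (μ : Measure M3) [IsProbabilityMeasure μ] (hsupp : μ SO3ᶜ = 0)
    (hleft : ∀ Q ∈ SO3, μ.map (fun R => Q * R) = μ)
    (hright : ∀ Q ∈ SO3, μ.map (fun R => R * Q) = μ)
    (s₁ s₂ s₃ : ℝ) (h12 : s₁ ≥ s₂) (h23 : s₂ ≥ |s₃|)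
    (hS : Matrix.diagonal ![s₁, s₂, s₃] ≠ 0)
    (σ : ℝ) (hσ0 : 0 ≤ σ)
    (hσmax : max ((2 * s₁ + s₂ - s₃ - 1) / (2 * s₁ + s₂ - s₃ + 1))
        ((s₁ - s₃) / (s₁ + s₂)) < σ)
    (hσ1 : σ < 1) :
    ∀ si sj sk : ℝ,
      (si, sj, sk) ∈ ({(s₁, s₂, s₃), (s₂, s₃, s₁), (s₃, s₁, s₂)} : Set (ℝ × ℝ × ℝ)) →
      (-1 < sigmaCos σ (Real.log (mfC μ (Matrix.diagonal ![s₁, s₂, s₃]))) si sj sk ∧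
        sigmaCos σ (Real.log (mfC μ (Matrix.diagonal ![s₁, s₂, s₃]))) si sj sk < 1) ∧
      (∃! t : ℝ, t ∈ Set.Ioo (0 : ℝ) Real.pi ∧
        Real.cos t =
          sigmaCos σ (Real.log (mfC μ (Matrix.diagonal ![s₁, s₂, s₃]))) si sj sk) ∧
      (-2 * s₁ - s₂ + s₃ <
          Real.log (mfC μ (Matrix.diagonal ![s₁, s₂, s₃])) - si ∧
        Real.log (mfC μ (Matrix.diagonal ![s₁, s₂, s₃])) - si < sj + sk) :=
  matrixFisher_sigmaPoint_angle_wellDefined_general μ hsupp hleft s₁ s₂ s₃ h12 h23 hS σ hσmax hσ1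

end
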